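/- Let μ ∈ ℂ with μ ∉ {0, 1}, a = (μ+μ⁻¹)/2, b = i(μ⁻¹−μ)/2, regarded as quaternions in the real span of 1 and i. Let n ∈ ℍ with Re n = 0 and n² = −1, φ ∈ ℍ \ {0}, and T = ½(n·φ·(a−1)·φ⁻¹ + φ·b·φ⁻¹). Set ρ̂ = φ·((1−a)/2)·φ⁻¹ (invertible since a ≠ 1) and T̂ = T·ρ̂⁻¹. Then T̂² + T̂·n + n·T̂ = ρ̂⁻¹, and T²·ρ̂⁻¹ commutes with n. (Key identities in the proof of Theorem 6.1.) -/

import Mathlib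

noncomputable section
open Complex

local notation "ℍ" => Quaternion ℝ

def cq (z : ℂ) : ℍ := ⟨z.re, z.im, 0, 0⟩

def aμ (μ : ℂ) : ℂ := (μ + μ⁻¹) / 2

def bμ (μ : ℂ) : ℂ := Complex.I * (μ⁻¹ - μ) / 2

def Tq (μ : ℂ) (n φ : ℍ) : ℍ :=
  (n * (φ * cq (aμ μ - 1) * φ⁻¹) + φ * cq (bμ μ) * φ⁻¹) / 2

def ρhat (μ : ℂ) (φ : ℍ) : ℍ := φ * cq ((1 - aμ μ) / 2) * φ⁻¹

def That (μ : ℂ) (n φ : ℍ) : ℍ := Tq μ n φ * (ρhat μ φ)⁻¹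

/-! Conjugation by `φ` after `ℂ ↪ ℍ` is a ring homomorphism `f`, with `ρ̂ = f ((1 - a) / 2)` and
`T = (f κ - n) ρ̂` for `κ = b / (1 - a)`. Hence `T̂ = f κ - n` and, as `n² = -1`,
`T̂² + T̂n + nT̂ = f (κ² + 1)`, which is `f ((1 - a) / 2)⁻¹ = ρ̂⁻¹` because `a² + b² = 1`.
For the second identity put `x = T̂`: then `T²ρ̂⁻¹ = T̂ρ̂T̂ = x (x² + xn + nx)⁻¹ x`, the inverse of
`x⁻¹ (x² + xn + nx) x⁻¹ = 1 + (n x⁻¹ + x⁻¹ n)`, and this anticommutator commutes with `n`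
because `n²` is central. -/

theorem commute_mul_add_mul_of_commute_mul_self {R : Type*} [Ring R] {n y : R}
    (h : Commute (n * n) y) : Commute n (n * y + y * n) := by
  simp only [Commute, SemiconjBy, mul_add, add_mul, ← mul_assoc] at h ⊢
  rw [h, add_comm]

theorem commute_mul_inv_mul_of_commute_mul_self {D : Type*} [DivisionRing D] {n x : D}
    (h : Commute (n * n) x) :
    Commute n (x * (x * x + x * n + n * x)⁻¹ * x) := by
  rcases eq_or_ne x 0 with rfl | hx
  · simp
  have hconj : x⁻¹ * (x * x + x * n + n * x) * x⁻¹ = 1 + (n * x⁻¹ + x⁻¹ * n) := by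
    simp only [mul_add, add_mul, ← mul_assoc, inv_mul_cancel₀ hx, one_mul, mul_inv_cancel_right₀ hx,
      mul_inv_cancel₀ hx]
    abel
  have hinv : x * (x * x + x * n + n * x)⁻¹ * x = (1 + (n * x⁻¹ + x⁻¹ * n))⁻¹ := by
    rw [← hconj, mul_inv_rev, mul_inv_rev, inv_inv, mul_assoc]
  rw [hinv]
  exact ((Commute.one_right n).add_right
    (commute_mul_add_mul_of_commute_mul_self h.inv_right₀)).inv_right₀

theorem div_one_sub_sq_add_one {F : Type*} [Field F] {a b : F} (hab : a ^ 2 + b ^ 2 = 1)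
    (ha : a ≠ 1) : (b / (1 - a)) ^ 2 + 1 = ((1 - a) / 2)⁻¹ := by
  have : 1 - a ≠ 0 := sub_ne_zero.mpr ha.symm
  rw [inv_div]
  field_simp
  linear_combination hab

theorem aμ_sq_add_bμ_sq {μ : ℂ} (hμ : μ ≠ 0) : aμ μ ^ 2 + bμ μ ^ 2 = 1 := by
  unfold aμ bμ
  field_simp
  linear_combination (μ ^ 2 - 1) ^ 2 * I_sq

theorem aμ_ne_one {μ : ℂ} (hμ0 : μ ≠ 0) (hμ1 : μ ≠ 1) : aμ μ ≠ 1 := by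
  intro h
  unfold aμ at h
  field_simp at h
  have : (μ - 1) ^ 2 = 0 := by linear_combination h
  exact hμ1 (sub_eq_zero.mp (pow_eq_zero_iff two_ne_zero |>.mp this))

@[simp] theorem re_cq (z : ℂ) : (cq z).re = z.re := rfl
@[simp] theorem imI_cq (z : ℂ) : (cq z).imI = z.im := rfl
@[simp] theorem imJ_cq (z : ℂ) : (cq z).imJ = 0 := rfl
@[simp] theorem imK_cq (z : ℂ) : (cq z).imK = 0 := rfl

theorem cq_I_mul_self : cq I * cq I = -1 := by
  ext <;> simp [Quaternion.re_mul, Quaternion.imI_mul, Quaternion.imJ_mul, Quaternion.imK_mul,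
    Quaternion.re_one, Quaternion.imI_one, Quaternion.imJ_one, Quaternion.imK_one]

def cqAlgHom : ℂ →ₐ[ℝ] ℍ := liftAux (cq I) cq_I_mul_self

theorem cqAlgHom_apply (z : ℂ) : cqAlgHom z = cq z := by
  rw [cqAlgHom, liftAux_apply]
  ext <;> simp

def conjCq (φ : ℍ) (hφ : φ ≠ 0) : ℂ →+* ℍ :=
  (MulSemiringAction.toRingHom (ConjAct ℍˣ) ℍ (ConjAct.toConjAct (Units.mk0 φ hφ))).comp
    cqAlgHom.toRingHom

theorem conjCq_apply (φ : ℍ) (hφ : φ ≠ 0) (z : ℂ) : conjCq φ hφ z = φ * cq z * φ⁻¹ := by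
  simp [conjCq, ConjAct.units_smul_def, cqAlgHom_apply]

theorem Tq_eq_mul_ρhat {μ : ℂ} (ha : aμ μ ≠ 1) (n : ℍ) {φ : ℍ} (hφ : φ ≠ 0) :
    Tq μ n φ = (conjCq φ hφ (bμ μ / (1 - aμ μ)) - n) * ρhat μ φ := by
  have : 1 - aμ μ ≠ 0 := sub_ne_zero.mpr ha.symm
  have hb : bμ μ / (1 - aμ μ) * ((1 - aμ μ) / 2) = bμ μ / 2 := by field_simp
  rw [ρhat, ← conjCq_apply φ hφ, sub_mul, ← map_mul, hb, Tq, ← conjCq_apply φ hφ,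
    ← conjCq_apply φ hφ]
  rw [map_div₀, map_div₀, map_sub, map_sub, map_one, map_ofNat]
  simp only [div_eq_mul_inv]
  noncomm_ring

theorem stmt_10_general (μ : ℂ) (hμ0 : μ ≠ 0) (hμ1 : μ ≠ 1)
    (n : ℍ) (hsq : n * n = -1)
    (φ : ℍ) (hφ : φ ≠ 0) :
    ρhat μ φ ≠ 0
    ∧ That μ n φ * That μ n φ + That μ n φ * n + n * That μ n φ = (ρhat μ φ)⁻¹
    ∧ (Tq μ n φ * Tq μ n φ * (ρhat μ φ)⁻¹) * n
        = n * (Tq μ n φ * Tq μ n φ * (ρhat μ φ)⁻¹) := by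
  set f := conjCq φ hφ
  have ha := aμ_ne_one hμ0 hμ1
  have hρ : ρhat μ φ = f ((1 - aμ μ) / 2) := (conjCq_apply φ hφ _).symm
  have hρ0 : ρhat μ φ ≠ 0 := by
    rw [hρ, map_ne_zero]
    exact div_ne_zero (sub_ne_zero.mpr ha.symm) two_ne_zero
  have hThat : That μ n φ = f (bμ μ / (1 - aμ μ)) - n := by
    rw [That, Tq_eq_mul_ρhat ha n hφ, mul_inv_cancel_right₀ hρ0]
  have hfirst : That μ n φ * That μ n φ + That μ n φ * n + n * That μ n φ = (ρhat μ φ)⁻¹ := by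
    rw [hρ, ← map_inv₀, ← div_one_sub_sq_add_one (aμ_sq_add_bμ_sq hμ0) ha, hThat]
    calc _ = f (bμ μ / (1 - aμ μ)) * f (bμ μ / (1 - aμ μ)) - n * n := by noncomm_ring
      _ = _ := by rw [hsq, map_add, map_pow, map_one, sq, sub_neg_eq_add]
  refine ⟨hρ0, hfirst, ?_⟩
  have hT2 : Tq μ n φ * Tq μ n φ * (ρhat μ φ)⁻¹ =
      That μ n φ * (That μ n φ * That μ n φ + That μ n φ * n + n * That μ n φ)⁻¹ *
        That μ n φ := by
    rw [hfirst, inv_inv, That, inv_mul_cancel_right₀ hρ0, mul_assoc]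
  rw [hT2]
  exact (commute_mul_inv_mul_of_commute_mul_self (hsq ▸ Commute.neg_one_left _)).eq.symm

theorem stmt_10 (μ : ℂ) (hμ0 : μ ≠ 0) (hμ1 : μ ≠ 1)
    (n : ℍ) (hre : n.re = 0) (hsq : n * n = -1)
    (φ : ℍ) (hφ : φ ≠ 0) :
    ρhat μ φ ≠ 0
    ∧ That μ n φ * That μ n φ + That μ n φ * n + n * That μ n φ = (ρhat μ φ)⁻¹
    ∧ (Tq μ n φ * Tq μ n φ * (ρhat μ φ)⁻¹) * n
        = n * (Tq μ n φ * Tq μ n φ * (ρhat μ φ)⁻¹) :=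
  stmt_10_general μ hμ0 hμ1 n hsq φ hφ
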